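/- arXiv:2201.07699 — 3 statements merged into one kernel-verified Lean document; each statement's English description precedes it below -/
import Mathlib

section
/- Let H₁,…,Hₙ ∈ ℝ^{d×d} be symmetric with M₁I ⪯ Hᵢ ⪯ M₂I for 0 < M₁ ≤ M₂, let M̄ = (M₁+M₂)/2, γ = 1 − M₁/M₂, and let g₁,…,gₙ ∈ ℝ^d with ḡ = (1/n)∑ᵢ gᵢ, H̄ = (1/n)∑ᵢ Hᵢ. Then ‖(1/n)∑ᵢ Hᵢgᵢ − H̄ḡ‖² ≤ (M₂²γ²/(4n))·∑ᵢ ‖gᵢ − ḡ‖². -/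
/-!
Since `∑ i, (gᵢ - ḡ) = 0`, the error `(1/n) ∑ Hᵢ gᵢ - H̄ ḡ` equals `(1/n) ∑ (Hᵢ - M̄ I) (gᵢ - ḡ)`
for the midpoint `M̄ = (M₁ + M₂) / 2`. Each `Hᵢ - M̄ I` is symmetric with Rayleigh quotients in
`[-(M₂ - M₁)/2, (M₂ - M₁)/2]`, so its operator norm is at most `(M₂ - M₁)/2 = M₂ γ / 2`; the
triangle inequality and Cauchy–Schwarz on `∑ ‖gᵢ - ḡ‖` finish the estimate.
-/

open Finset RCLike
open scoped ComplexOrder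

namespace ContinuousLinearMap

variable {𝕜 E : Type*} [RCLike 𝕜] [NormedAddCommGroup E] [InnerProductSpace 𝕜 E]

theorem norm_le_of_abs_reApplyInnerSelf_le {T : E →L[𝕜] E} (hT : (T : E →ₗ[𝕜] E).IsSymmetric)
    {c : ℝ} (hc : 0 ≤ c) (h : ∀ x, |T.reApplyInnerSelf x| ≤ c * ‖x‖ ^ 2) : ‖T‖ ≤ c := by
  rw [T.norm_eq_iSup_rayleighQuotient hT]
  refine ciSup_le fun x ↦ ?_
  rcases eq_or_ne x 0 with rfl | _
  · simpa using hc
  · rw [rayleighQuotient, abs_div, abs_sq, div_le_iff₀ (by positivity)]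
    exact h x

theorem reApplyInnerSelf_sub (T S : E →L[𝕜] E) (x : E) :
    (T - S).reApplyInnerSelf x = T.reApplyInnerSelf x - S.reApplyInnerSelf x := by
  simp only [reApplyInnerSelf_apply, sub_apply, inner_sub_left, map_sub]

@[simp]
theorem reApplyInnerSelf_ofReal_smul_one (a : ℝ) (x : E) :
    ((a : 𝕜) • (1 : E →L[𝕜] E)).reApplyInnerSelf x = a * ‖x‖ ^ 2 := by
  simp [reApplyInnerSelf_apply, inner_smul_left, inner_self_eq_norm_sq_to_K]

theorem isSymmetric_ofReal_smul_one (a : ℝ) :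
    (((a : 𝕜) • (1 : E →L[𝕜] E) : E →L[𝕜] E) : E →ₗ[𝕜] E).IsSymmetric := by
  intro x y
  simp [inner_smul_left, inner_smul_right]

theorem norm_sub_midpoint_smul_one_le {T : E →L[𝕜] E} {a b : ℝ} (hab : a ≤ b)
    (ha : (a : 𝕜) • 1 ≤ T) (hb : T ≤ (b : 𝕜) • 1) :
    ‖T - (((a + b) / 2 : ℝ) : 𝕜) • 1‖ ≤ (b - a) / 2 := by
  have hlow x : a * ‖x‖ ^ 2 ≤ T.reApplyInnerSelf x := by
    have := ha.re_inner_nonneg_left x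
    rw [← reApplyInnerSelf_apply, reApplyInnerSelf_sub, reApplyInnerSelf_ofReal_smul_one] at this
    linarith
  have hup x : T.reApplyInnerSelf x ≤ b * ‖x‖ ^ 2 := by
    have := hb.re_inner_nonneg_left x
    rw [← reApplyInnerSelf_apply, reApplyInnerSelf_sub, reApplyInnerSelf_ofReal_smul_one] at this
    linarith
  have hT : (T : E →ₗ[𝕜] E).IsSymmetric := by
    simpa using ha.isSymmetric.add (isSymmetric_ofReal_smul_one (𝕜 := 𝕜) (E := E) a)
  refine norm_le_of_abs_reApplyInnerSelf_le (hT.sub (isSymmetric_ofReal_smul_one _))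
    (by linarith) fun x ↦ ?_
  rw [reApplyInnerSelf_sub, reApplyInnerSelf_ofReal_smul_one, abs_le]
  constructor <;> nlinarith [hlow x, hup x]

variable {F : Type*} [NormedAddCommGroup F] [InnerProductSpace 𝕜 F]

theorem norm_sum_apply_sq_le {ι : Type*} (s : Finset ι) (A : ι → E →L[𝕜] F) (v : ι → E) {c : ℝ}
    (hA : ∀ i ∈ s, ‖A i‖ ≤ c) :
    ‖∑ i ∈ s, A i (v i)‖ ^ 2 ≤ c ^ 2 * #s * ∑ i ∈ s, ‖v i‖ ^ 2 := by
  have hnorm : ‖∑ i ∈ s, A i (v i)‖ ≤ ∑ i ∈ s, c * ‖v i‖ :=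
    (norm_sum_le _ _).trans <| sum_le_sum fun i hi ↦ (A i).le_of_opNorm_le (hA i hi) (v i)
  calc ‖∑ i ∈ s, A i (v i)‖ ^ 2 ≤ (∑ i ∈ s, c * ‖v i‖) ^ 2 := by gcongr
    _ ≤ #s * ∑ i ∈ s, (c * ‖v i‖) ^ 2 := sq_sum_le_card_mul_sum_sq
    _ = c ^ 2 * #s * ∑ i ∈ s, ‖v i‖ ^ 2 := by simp only [mul_pow, ← mul_sum]; ring

theorem sum_apply_sub_sum_apply_eq_sum_sub_apply_sub {ι : Type*} (s : Finset ι)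
    (T : ι → E →L[𝕜] F) (A : E →L[𝕜] F) (g : ι → E) (x : E) (hx : ∑ i ∈ s, (g i - x) = 0) :
    ∑ i ∈ s, T i (g i) - (∑ i ∈ s, T i) x = ∑ i ∈ s, (T i - A) (g i - x) := by
  have hA : ∑ i ∈ s, A (g i - x) = 0 := by rw [← map_sum, hx, map_zero]
  calc ∑ i ∈ s, T i (g i) - (∑ i ∈ s, T i) x = ∑ i ∈ s, T i (g i - x) := by
        simp only [map_sub, sum_sub_distrib, _root_.sum_apply]
    _ = ∑ i ∈ s, T i (g i - x) - ∑ i ∈ s, A (g i - x) := by rw [hA, sub_zero]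
    _ = ∑ i ∈ s, (T i - A) (g i - x) := by simp only [sub_apply, sum_sub_distrib]

end ContinuousLinearMap

theorem Finset.sum_sub_average_eq_zero {ι 𝕜 E : Type*} [Field 𝕜] [CharZero 𝕜] [AddCommGroup E]
    [Module 𝕜 E] (s : Finset ι) (g : ι → E) :
    ∑ i ∈ s, (g i - (1 / (#s : 𝕜)) • ∑ j ∈ s, g j) = 0 := by
  rcases s.eq_empty_or_nonempty with rfl | hs
  · simp
  · rw [sum_sub_distrib, sum_const, ← Nat.cast_smul_eq_nsmul 𝕜, smul_smul,
      mul_one_div_cancel (by simpa using hs.ne_empty), one_smul, sub_self]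

theorem Matrix.toEuclideanCLM_le_toEuclideanCLM_iff {𝕜 n : Type*} [RCLike 𝕜] [Fintype n]
    [DecidableEq n] {A B : Matrix n n 𝕜} :
    toEuclideanCLM (𝕜 := 𝕜) (n := n) A ≤ toEuclideanCLM (𝕜 := 𝕜) (n := n) B ↔
      (B - A).PosSemidef := by
  rw [ContinuousLinearMap.le_def, ← map_sub, ← ContinuousLinearMap.isPositive_toLinearMap_iff,
    coe_toEuclideanCLM_eq_toEuclideanLin, isPositive_toEuclideanLin_iff]

open Matrix in
theorem hessian_avg_direction_error_general (d n : ℕ)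
    (M₁ M₂ : ℝ) (hM₁ : 0 < M₁) (hM : M₁ ≤ M₂)
    (H : Fin n → Matrix (Fin d) (Fin d) ℝ)
    (hlb : ∀ i, (H i - M₁ • (1 : Matrix (Fin d) (Fin d) ℝ)).PosSemidef)
    (hub : ∀ i, (M₂ • (1 : Matrix (Fin d) (Fin d) ℝ) - H i).PosSemidef)
    (g : Fin n → EuclideanSpace ℝ (Fin d))
    (gbar : EuclideanSpace ℝ (Fin d)) (hgbar : gbar = (1 / (n : ℝ)) • ∑ i, g i)
    (Hbar : Matrix (Fin d) (Fin d) ℝ) (hHbar : Hbar = (1 / (n : ℝ)) • ∑ i, H i)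
    (γ : ℝ) (hγ : γ = 1 - M₁ / M₂) :
    ‖(1 / (n : ℝ)) • (∑ i, Matrix.toEuclideanCLM (𝕜 := ℝ) (H i) (g i)) -
        Matrix.toEuclideanCLM (𝕜 := ℝ) Hbar gbar‖ ^ 2 ≤
      M₂ ^ 2 * γ ^ 2 / (4 * n) * ∑ i, ‖g i - gbar‖ ^ 2 := by
  set φ := toEuclideanCLM (𝕜 := ℝ) (n := Fin d)
  have hscalar (a : ℝ) : φ (a • 1) = a • 1 := by rw [map_smul, map_one]
  have hnear i : ‖φ (H i) - ((M₁ + M₂) / 2 : ℝ) • 1‖ ≤ (M₂ - M₁) / 2 :=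
    ContinuousLinearMap.norm_sub_midpoint_smul_one_le hM
      (hscalar M₁ ▸ toEuclideanCLM_le_toEuclideanCLM_iff.2 (hlb i))
      (hscalar M₂ ▸ toEuclideanCLM_le_toEuclideanCLM_iff.2 (hub i))
  have hcentered : ∑ i, (g i - gbar) = 0 := by
    simpa [hgbar] using Finset.sum_sub_average_eq_zero (𝕜 := ℝ) Finset.univ g
  have hHbar' : φ Hbar = (1 / (n : ℝ)) • ∑ i, φ (H i) := by
    rw [hHbar, map_smul, map_sum]
  have hγ' : M₂ ^ 2 * γ ^ 2 = (M₂ - M₁) ^ 2 := by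
    rw [hγ]; field_simp [(hM₁.trans_le hM).ne']
  have hbound := ContinuousLinearMap.norm_sum_apply_sq_le univ _ (fun i ↦ g i - gbar)
    fun i _ ↦ hnear i
  rw [card_univ, Fintype.card_fin] at hbound
  rw [hHbar', _root_.smul_apply, ← smul_sub,
    ContinuousLinearMap.sum_apply_sub_sum_apply_eq_sum_sub_apply_sub _ _ _ _ _ hcentered,
    norm_smul, mul_pow]
  refine (mul_le_mul_of_nonneg_left hbound (by positivity)).trans_eq ?_
  rcases eq_or_ne (n : ℝ) 0 with hn | hn
  · simp [hn]
  · rw [hγ', Real.norm_eq_abs, abs_of_nonneg (by positivity)]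
    field_simp
    ring

theorem hessian_avg_direction_error (d n : ℕ) (hn : 0 < n)
    (M₁ M₂ : ℝ) (hM₁ : 0 < M₁) (hM : M₁ ≤ M₂)
    (H : Fin n → Matrix (Fin d) (Fin d) ℝ)
    (hsym : ∀ i, (H i).IsSymm)
    (hlb : ∀ i, (H i - M₁ • (1 : Matrix (Fin d) (Fin d) ℝ)).PosSemidef)
    (hub : ∀ i, (M₂ • (1 : Matrix (Fin d) (Fin d) ℝ) - H i).PosSemidef)
    (g : Fin n → EuclideanSpace ℝ (Fin d))
    (gbar : EuclideanSpace ℝ (Fin d)) (hgbar : gbar = (1 / (n : ℝ)) • ∑ i, g i)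
    (Hbar : Matrix (Fin d) (Fin d) ℝ) (hHbar : Hbar = (1 / (n : ℝ)) • ∑ i, H i)
    (γ : ℝ) (hγ : γ = 1 - M₁ / M₂) :
    ‖(1 / (n : ℝ)) • (∑ i, Matrix.toEuclideanCLM (𝕜 := ℝ) (H i) (g i)) -
        Matrix.toEuclideanCLM (𝕜 := ℝ) Hbar gbar‖ ^ 2 ≤
      M₂ ^ 2 * γ ^ 2 / (4 * n) * ∑ i, ‖g i - gbar‖ ^ 2 :=
  hessian_avg_direction_error_general d n M₁ M₂ hM₁ hM H hlb hub g gbar hgbar Hbar hHbar γ hγ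
end

section
/- Let x̄^{k+1} = x̄^k − α d̄^k, let F be L-smooth, and let H̄ be symmetric with M₁I ⪯ H̄ ⪯ M₂I. Then F(x̄^{k+1}) ≤ F(x̄^k) − α M₁‖∇F(x̄^k)‖² + α⟨∇F(x̄^k), H̄∇F(x̄^k) − d̄^k⟩ + α²L(‖H̄∇F(x̄^k)‖² + ‖H̄∇F(x̄^k) − d̄^k‖²). -/
/-!
Write `g = ∇F(x̄ᵏ)` and `h = H̄ g`. The quadratic upper bound of `L`-smoothness at the step
`-α d̄ᵏ` gives `F(x̄ᵏ⁺¹) ≤ F(x̄ᵏ) - α⟪g, d̄ᵏ⟫ + (L/2) α² ‖d̄ᵏ‖²`. Splitting `d̄ᵏ = h - (h - d̄ᵏ)`,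
the term `-α⟪g, h⟫` is at most `-α M₁ ‖g‖²` because `H̄ - M₁ I ⪰ 0`, and
`‖d̄ᵏ‖² ≤ 2 (‖h‖² + ‖h - d̄ᵏ‖²)`.
-/

open scoped RealInnerProductSpace

theorem norm_sub_sq_le_two_mul {E : Type*} [SeminormedAddCommGroup E] (a b : E) :
    ‖a - b‖ ^ 2 ≤ 2 * (‖a‖ ^ 2 + ‖b‖ ^ 2) :=
  (pow_le_pow_left₀ (norm_nonneg _) (norm_sub_le a b) 2).trans add_sq_le

theorem Matrix.PosSemidef.mul_norm_sq_le_inner_toEuclideanCLM {n : Type*} [Fintype n]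
    [DecidableEq n] {A : Matrix n n ℝ} {c : ℝ} (h : (A - c • 1).PosSemidef)
    (x : EuclideanSpace ℝ n) :
    c * ‖x‖ ^ 2 ≤ ⟪x, Matrix.toEuclideanCLM (𝕜 := ℝ) A x⟫ := by
  have hx := h.dotProduct_mulVec_nonneg (WithLp.ofLp x)
  rw [← Matrix.inner_toEuclideanCLM] at hx
  simpa [inner_sub_right, inner_smul_right, real_inner_self_eq_norm_sq] using hx

theorem apply_sub_smul_le_of_quadratic_upper_bound {E : Type*} [NormedAddCommGroup E]
    [InnerProductSpace ℝ E] {F : E → ℝ} {F' : E → E} {L : ℝ}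
    (hsmooth : ∀ x y, F y ≤ F x + ⟪F' x, y - x⟫ + L / 2 * ‖y - x‖ ^ 2) (α : ℝ) (x d : E) :
    F (x - α • d) ≤ F x - α * ⟪F' x, d⟫ + L / 2 * α ^ 2 * ‖d‖ ^ 2 := by
  have h := hsmooth x (x - α • d)
  rwa [sub_sub_cancel_left, inner_neg_right, inner_smul_right, norm_neg, norm_smul,
    Real.norm_eq_abs, mul_pow, sq_abs, ← sub_eq_add_neg, ← mul_assoc] at h

theorem descent_step_bound_general (d : ℕ) (L α M₁ : ℝ) (hL : 0 < L) (hα : 0 < α)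
    (F : EuclideanSpace ℝ (Fin d) → ℝ)
    (F' : EuclideanSpace ℝ (Fin d) → EuclideanSpace ℝ (Fin d))
    (hsmooth : ∀ x y, F y ≤ F x + ⟪F' x, y - x⟫ + L / 2 * ‖y - x‖ ^ 2)
    (Hbar : Matrix (Fin d) (Fin d) ℝ)
    (hlb : (Hbar - M₁ • (1 : Matrix (Fin d) (Fin d) ℝ)).PosSemidef)
    (xk dk xk1 : EuclideanSpace ℝ (Fin d)) (hstep : xk1 = xk - α • dk) :
    F xk1 ≤ F xk - α * M₁ * ‖F' xk‖ ^ 2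
      + α * ⟪F' xk, Matrix.toEuclideanCLM (𝕜 := ℝ) Hbar (F' xk) - dk⟫
      + α ^ 2 * L * (‖Matrix.toEuclideanCLM (𝕜 := ℝ) Hbar (F' xk)‖ ^ 2
        + ‖Matrix.toEuclideanCLM (𝕜 := ℝ) Hbar (F' xk) - dk‖ ^ 2) := by
  set g := F' xk
  set h := Matrix.toEuclideanCLM (𝕜 := ℝ) Hbar g
  have hquad : M₁ * ‖g‖ ^ 2 ≤ ⟪g, h⟫ := hlb.mul_norm_sq_le_inner_toEuclideanCLM g
  have hdk : ‖dk‖ ^ 2 ≤ 2 * (‖h‖ ^ 2 + ‖h - dk‖ ^ 2) := by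
    simpa only [sub_sub_cancel] using norm_sub_sq_le_two_mul h (h - dk)
  have hsplit : ⟪g, dk⟫ = ⟪g, h⟫ - ⟪g, h - dk⟫ := by rw [inner_sub_right]; ring
  calc F xk1 ≤ F xk - α * ⟪g, dk⟫ + L / 2 * α ^ 2 * ‖dk‖ ^ 2 :=
        hstep ▸ apply_sub_smul_le_of_quadratic_upper_bound hsmooth α xk dk
    _ ≤ _ := by
        rw [hsplit]
        linarith [mul_le_mul_of_nonneg_left hquad hα.le,
          mul_le_mul_of_nonneg_left hdk (by positivity : 0 ≤ L / 2 * α ^ 2)]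

theorem descent_step_bound (d : ℕ) (L α M₁ M₂ : ℝ) (hL : 0 < L) (hα : 0 < α)
    (hM₁ : 0 < M₁) (hM : M₁ ≤ M₂)
    (F : EuclideanSpace ℝ (Fin d) → ℝ)
    (F' : EuclideanSpace ℝ (Fin d) → EuclideanSpace ℝ (Fin d))
    (hdiff : ∀ x, HasGradientAt F (F' x) x)
    (hsmooth : ∀ x y, F y ≤ F x + ⟪F' x, y - x⟫ + L / 2 * ‖y - x‖ ^ 2)
    (Hbar : Matrix (Fin d) (Fin d) ℝ) (hsym : Hbar.IsSymm)
    (hlb : (Hbar - M₁ • (1 : Matrix (Fin d) (Fin d) ℝ)).PosSemidef)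
    (hub : (M₂ • (1 : Matrix (Fin d) (Fin d) ℝ) - Hbar).PosSemidef)
    (xk dk xk1 : EuclideanSpace ℝ (Fin d)) (hstep : xk1 = xk - α • dk) :
    F xk1 ≤ F xk - α * M₁ * ‖F' xk‖ ^ 2
      + α * ⟪F' xk, Matrix.toEuclideanCLM (𝕜 := ℝ) Hbar (F' xk) - dk⟫
      + α ^ 2 * L * (‖Matrix.toEuclideanCLM (𝕜 := ℝ) Hbar (F' xk)‖ ^ 2
        + ‖Matrix.toEuclideanCLM (𝕜 := ℝ) Hbar (F' xk) - dk‖ ^ 2) :=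
  descent_step_bound_general d L α M₁ hL hα F F' hsmooth Hbar hlb xk dk xk1 hstep
end

section
/- Let J ∈ ℝ^{3×3} and H ∈ ℝ^{3×3} be entrywise nonnegative matrices with ρ(J) < 1. If there exists a positive vector q ∈ ℝ³ and θ ∈ (0,1) with (I − J)^{-1}H·q ≤ θq entrywise, and ‖J^T‖ (in the weighted infinity norm induced by q) tends to 0 as T → ∞, then for T large enough the matrix J^T + ∑_{l=0}^{T−1} J^l H has spectral radius strictly less than 1. -/
/-!
With `S_T = ∑_{l<T} J ^ l` the matrix is `J ^ T + S_T * H`. Since `J ^ T → 0`, the partial sums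
`S_T` increase to `(1 - J)⁻¹`, so `(J ^ T + S_T * H) q ≤ (‖J ^ T‖_q + θ) q` entrywise. For a
nonnegative matrix `M` and a positive vector `q`, `M q ≤ c q` bounds every eigenvalue by `c`,
and `‖J ^ T‖_q + θ < 1` for large `T`.
-/

/-- Weighted infinity operator norm of a matrix, induced by the weighted
vector norm `‖a‖_∞^q = max_i |a_i| / q_i` for a positive weight vector `q`. -/
noncomputable def wMatNorm (q : Fin 3 → ℝ) (J : Matrix (Fin 3) (Fin 3) ℝ) : ℝ :=
  Finset.univ.sup' Finset.univ_nonempty (fun i => (∑ j, |J i j| * q j) / q i)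

open Filter Topology Finset
open scoped Matrix

namespace Matrix

section Neumann

variable {n K : Type*} [Fintype n] [DecidableEq n] [Field K] [TopologicalSpace K]
  [IsTopologicalRing K] [T2Space K] {J : Matrix n n K}

/-- `det (1 - J) * det (∑ l < T, J ^ l) = det (1 - J ^ T)` tends to `det 1 = 1`. -/
theorem isUnit_one_sub_of_tendsto_pow (h : Tendsto (J ^ ·) atTop (𝓝 0)) :
    IsUnit (1 - J) := by
  rw [isUnit_iff_isUnit_det, isUnit_iff_ne_zero]
  intro hdet
  have hlim : Tendsto (fun T ↦ (1 - J ^ T).det) atTop (𝓝 (1 - 0 : Matrix n n K).det) :=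
    (continuous_id.matrix_det.tendsto _).comp (tendsto_const_nhds.sub h)
  have hzero : ∀ T, (1 - J ^ T).det = 0 := fun T ↦ by
    rw [← mul_neg_geom_sum, det_mul, hdet, zero_mul]
  simp only [hzero, sub_zero, det_one] at hlim
  exact zero_ne_one (tendsto_nhds_unique tendsto_const_nhds hlim)

theorem tendsto_sum_range_pow (h : Tendsto (J ^ ·) atTop (𝓝 0)) :
    Tendsto (fun T ↦ ∑ l ∈ range T, J ^ l) atTop (𝓝 (1 - J)⁻¹) := by
  have hinv : (1 - J)⁻¹ * (1 - J) = 1 :=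
    nonsing_inv_mul _ ((isUnit_iff_isUnit_det _).mp (isUnit_one_sub_of_tendsto_pow h))
  have hsum : ∀ T, ∑ l ∈ range T, J ^ l = (1 - J)⁻¹ * (1 - J ^ T) := fun T ↦ by
    rw [← mul_neg_geom_sum, ← Matrix.mul_assoc, hinv, Matrix.one_mul]
  simpa [hsum] using (tendsto_const_nhds (x := (1 : Matrix n n K)).sub h).const_mul (1 - J)⁻¹

end Neumann

variable {m n : Type*} [Fintype n]

theorem mul_apply_nonneg {p : Type*} {A : Matrix m n ℝ} {B : Matrix n p ℝ}
    (hA : ∀ i j, 0 ≤ A i j) (hB : ∀ i j, 0 ≤ B i j) (i : m) (j : p) : 0 ≤ (A * B) i j :=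
  sum_nonneg fun k _ ↦ mul_nonneg (hA i k) (hB k j)

theorem mulVec_nonneg {A : Matrix m n ℝ} (hA : ∀ i j, 0 ≤ A i j) {v : n → ℝ} (hv : 0 ≤ v) :
    0 ≤ A *ᵥ v :=
  fun i ↦ sum_nonneg fun j _ ↦ mul_nonneg (hA i j) (hv j)

theorem mulVec_le_mulVec_of_le {A B : Matrix m n ℝ} (hAB : ∀ i j, A i j ≤ B i j) {v : n → ℝ}
    (hv : 0 ≤ v) (i : m) : (A *ᵥ v) i ≤ (B *ᵥ v) i :=
  sum_le_sum fun j _ ↦ mul_le_mul_of_nonneg_right (hAB i j) (hv j)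

variable [DecidableEq n]

theorem sum_range_pow_apply_le_inv {J : Matrix n n ℝ} (hJ : ∀ i j, 0 ≤ J i j)
    (h : Tendsto (J ^ ·) atTop (𝓝 0)) (T : ℕ) (i j : n) :
    (∑ l ∈ range T, J ^ l) i j ≤ (1 - J)⁻¹ i j := by
  have hmono : Monotone fun T ↦ (∑ l ∈ range T, J ^ l) i j := by
    refine monotone_nat_of_le_succ fun T ↦ ?_
    simp only [sum_range_succ, add_apply]
    exact le_add_of_nonneg_right (pow_apply_nonneg hJ T i j)
  exact hmono.ge_of_tendsto ((continuous_apply_apply i j).tendsto _ |>.comp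
    (tendsto_sum_range_pow h)) T

theorem sum_range_pow_mul_mulVec_le {J H : Matrix n n ℝ} (hJ : ∀ i j, 0 ≤ J i j)
    (hH : ∀ i j, 0 ≤ H i j) (h : Tendsto (J ^ ·) atTop (𝓝 0)) {q : n → ℝ} (hq : 0 ≤ q)
    (T : ℕ) (i : n) : (((∑ l ∈ range T, J ^ l) * H) *ᵥ q) i ≤ (((1 - J)⁻¹ * H) *ᵥ q) i := by
  rw [← mulVec_mulVec, ← mulVec_mulVec]
  exact mulVec_le_mulVec_of_le (sum_range_pow_apply_le_inv hJ h T) (mulVec_nonneg hH hq) i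

theorem exists_mulVec_eq_smul_of_mem_spectrum {K : Type*} [Field K] {A : Matrix n n K} {μ : K}
    (hμ : μ ∈ spectrum K A) : ∃ v ≠ 0, A *ᵥ v = μ • v := by
  rw [← spectrum_toLin', ← Module.End.hasEigenvalue_iff_mem_spectrum] at hμ
  obtain ⟨v, hv⟩ := hμ.exists_hasEigenvector
  exact ⟨v, hv.2, by simpa using hv.apply_eq_smul⟩

/-- Evaluate the eigenvalue equation at a coordinate where `|v k| / q k` is maximal. -/
theorem norm_le_of_mem_spectrum_of_mulVec_le {M : Matrix n n ℝ} (hM : ∀ i j, 0 ≤ M i j)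
    {q : n → ℝ} (hq : ∀ i, 0 < q i) {c : ℝ} (hc : ∀ i, (M *ᵥ q) i ≤ c * q i) {μ : ℂ}
    (hμ : μ ∈ spectrum ℂ (M.map ((↑) : ℝ → ℂ))) : ‖μ‖ ≤ c := by
  obtain ⟨v, hv0, hv⟩ := exists_mulVec_eq_smul_of_mem_spectrum hμ
  obtain ⟨j, hj⟩ := Function.ne_iff.mp hv0
  obtain ⟨i, -, hi⟩ := exists_max_image univ (fun i ↦ ‖v i‖ / q i) ⟨j, mem_univ j⟩
  set r := ‖v i‖ / q i
  have hr : 0 < r :=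
    (div_pos (norm_pos_iff.mpr (by simpa using hj)) (hq j)).trans_le (hi j (mem_univ j))
  have hv_le : ∀ k, ‖v k‖ ≤ r * q k := fun k ↦ (div_le_iff₀ (hq k)).mp (hi k (mem_univ k))
  have key : ‖μ‖ * (r * q i) ≤ c * (r * q i) :=
    calc ‖μ‖ * (r * q i) = ‖∑ k, (M i k : ℂ) * v k‖ := by
          rw [div_mul_cancel₀ _ (hq i).ne', ← norm_mul, ← smul_eq_mul, ← Pi.smul_apply, ← hv]
          simp [mulVec, dotProduct]
      _ ≤ ∑ k, M i k * ‖v k‖ := by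
          refine (norm_sum_le _ _).trans_eq (sum_congr rfl fun k _ ↦ ?_)
          rw [norm_mul, Complex.norm_real, Real.norm_of_nonneg (hM i k)]
      _ ≤ ∑ k, M i k * (r * q k) :=
          sum_le_sum fun k _ ↦ mul_le_mul_of_nonneg_left (hv_le k) (hM i k)
      _ = r * (M *ᵥ q) i := by simp only [mulVec, dotProduct, mul_sum, mul_left_comm r]
      _ ≤ c * (r * q i) := by nlinarith [hc i]
  exact le_of_mul_le_mul_right key (mul_pos hr (hq i))

end Matrix

section WeightedNorm

variable {q : Fin 3 → ℝ}

theorem sum_abs_mul_le_wMatNorm_mul (hq : ∀ i, 0 < q i) (A : Matrix (Fin 3) (Fin 3) ℝ)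
    (i : Fin 3) : ∑ j, |A i j| * q j ≤ wMatNorm q A * q i :=
  (div_le_iff₀ (hq i)).mp (le_sup' (fun i ↦ (∑ j, |A i j| * q j) / q i) (mem_univ i))

theorem mulVec_le_wMatNorm_mul (hq : ∀ i, 0 < q i) (A : Matrix (Fin 3) (Fin 3) ℝ)
    (i : Fin 3) : (A *ᵥ q) i ≤ wMatNorm q A * q i :=
  (sum_le_sum fun j _ ↦ mul_le_mul_of_nonneg_right (le_abs_self (A i j)) (hq j).le).trans
    (sum_abs_mul_le_wMatNorm_mul hq A i)

theorem abs_apply_le_wMatNorm_mul_div (hq : ∀ i, 0 < q i) (A : Matrix (Fin 3) (Fin 3) ℝ)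
    (i j : Fin 3) : |A i j| ≤ wMatNorm q A * (q i / q j) := by
  rw [mul_div_assoc', le_div_iff₀ (hq j)]
  exact (single_le_sum (fun k _ ↦ mul_nonneg (abs_nonneg (A i k)) (hq k).le) (mem_univ j)).trans
    (sum_abs_mul_le_wMatNorm_mul hq A i)

theorem tendsto_zero_of_tendsto_wMatNorm (hq : ∀ i, 0 < q i) {α : Type*} {l : Filter α}
    {A : α → Matrix (Fin 3) (Fin 3) ℝ} (h : Tendsto (fun a ↦ wMatNorm q (A a)) l (𝓝 0)) :
    Tendsto A l (𝓝 0) := by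
  refine tendsto_pi_nhds.2 fun i ↦ tendsto_pi_nhds.2 fun j ↦
    squeeze_zero_norm (fun a ↦ abs_apply_le_wMatNorm_mul_div hq (A a) i j) ?_
  simpa using h.mul_const (q i / q j)

end WeightedNorm

theorem eventually_spectral_radius_lt_one_general
    (J H : Matrix (Fin 3) (Fin 3) ℝ)
    (hJ : ∀ i j, 0 ≤ J i j) (hH : ∀ i j, 0 ≤ H i j)
    (q : Fin 3 → ℝ) (hq : ∀ i, 0 < q i)
    (θ : ℝ) (hθ1 : θ < 1)
    (hsub : ∀ i, ((1 - J)⁻¹ * H).mulVec q i ≤ θ * q i)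
    (hdecay : Filter.Tendsto (fun T => wMatNorm q (J ^ T)) Filter.atTop (nhds 0)) :
    ∃ T₀ : ℕ, ∀ T ≥ T₀,
      ∀ μ ∈ spectrum ℂ
          ((J ^ T + ∑ l ∈ Finset.range T, J ^ l * H).map ((↑) : ℝ → ℂ)),
        ‖μ‖ < 1 := by
  have hpow : Tendsto (J ^ ·) atTop (𝓝 0) := tendsto_zero_of_tendsto_wMatNorm hq hdecay
  obtain ⟨T₀, hT₀⟩ := eventually_atTop.1 (hdecay.eventually (gt_mem_nhds (sub_pos.2 hθ1)))
  refine ⟨T₀, fun T hT μ hμ ↦ ?_⟩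
  have hM : ∀ i j, 0 ≤ (J ^ T + ∑ l ∈ range T, J ^ l * H) i j := fun i j ↦ by
    rw [Matrix.add_apply, Matrix.sum_apply]
    exact add_nonneg (Matrix.pow_apply_nonneg hJ T i j)
      (sum_nonneg fun l _ ↦ Matrix.mul_apply_nonneg (Matrix.pow_apply_nonneg hJ l) hH i j)
  have hMq : ∀ i, ((J ^ T + ∑ l ∈ range T, J ^ l * H) *ᵥ q) i ≤
      (wMatNorm q (J ^ T) + θ) * q i := fun i ↦ by
    rw [← sum_mul, Matrix.add_mulVec, Pi.add_apply, add_mul]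
    exact add_le_add (mulVec_le_wMatNorm_mul hq _ i)
      ((Matrix.sum_range_pow_mul_mulVec_le hJ hH hpow (fun k ↦ (hq k).le) T i).trans (hsub i))
  linarith [Matrix.norm_le_of_mem_spectrum_of_mulVec_le hM hq hMq hμ, hT₀ T hT]

theorem eventually_spectral_radius_lt_one
    (J H : Matrix (Fin 3) (Fin 3) ℝ)
    (hJ : ∀ i j, 0 ≤ J i j) (hH : ∀ i j, 0 ≤ H i j)
    (hρJ : ∀ μ ∈ spectrum ℂ (J.map ((↑) : ℝ → ℂ)), ‖μ‖ < 1)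
    (q : Fin 3 → ℝ) (hq : ∀ i, 0 < q i)
    (θ : ℝ) (hθ0 : 0 < θ) (hθ1 : θ < 1)
    (hsub : ∀ i, ((1 - J)⁻¹ * H).mulVec q i ≤ θ * q i)
    (hdecay : Filter.Tendsto (fun T => wMatNorm q (J ^ T)) Filter.atTop (nhds 0)) :
    ∃ T₀ : ℕ, ∀ T ≥ T₀,
      ∀ μ ∈ spectrum ℂ
          ((J ^ T + ∑ l ∈ Finset.range T, J ^ l * H).map ((↑) : ℝ → ℂ)),
        ‖μ‖ < 1 :=
  eventually_spectral_radius_lt_one_general J H hJ hH q hq θ hθ1 hsub hdecay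
end
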